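/- arXiv:math/0204255 — 3 statements merged into one kernel-verified Lean document; each statement's English description precedes it below -/
import Mathlib

section
/- Semantic version of the first epsilon theorem (simplest case): suppose a quantifier-free, epsilon-free formula E is a classical consequence of a set of critical formulas A(t₁) → A(c), …, A(tₙ) → A(c), where c is a fresh constant (playing the role of εx A(x)) not occurring in E or in A(tᵢ). Then E is already a classical propositional consequence of the empty set, i.e., E is valid. -/
/-- Semantic first epsilon theorem (simplest case), per structure: if in a
    structure with domain M the (epsilon-free) formula E, whose truth value P
    does not depend on the interpretation c of the fresh constant, is a
    consequence of the critical formulas A(tᵢ) → A(c), then E holds outright.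
    Quantifying over all structures, E is valid. -/
theorem stmt_10 (M : Type*) [Nonempty M] (A : M → Prop) (n : ℕ)
    (t : Fin n → M) (P : Prop)
    (hconseq : ∀ c : M, (∀ i, A (t i) → A c) → P) : P :=
  -- Interpreting `c` as Hilbert's `ε x, A x` makes every critical formula true at once.
  hconseq (Classical.epsilon A) fun i hi => Classical.epsilon_spec ⟨t i, hi⟩
end

section
/- Elimination of free variables: if a quantifier-free formula F without free variables is provable in the elementary calculus of free variables (propositional axioms, substitution rule for free variables, modus ponens) from quantifier-free axioms, then F is provable from variable-free substitution instances of those axioms using modus ponens alone (no substitution rule needed). -/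
/-!
Push a substitution by variable-free terms through the whole derivation. A substitution step
is absorbed by composing it into the closing substitution, a closed instance of a tautology is
again a tautology, and modus ponens commutes with substitution. Applied with any closing
substitution, this derives a closed instance of `F` by modus ponens alone, and `F` is its own
instance because it is closed.
-/

/-- Terms over an arithmetic signature, with free variables. -/
inductive Tm where
  | var : ℕ → Tm
  | zero : Tm
  | succ : Tm → Tm

/-- Quantifier-free formulas: Boolean combinations of equations. -/
inductive Fm where
  | eq : Tm → Tm → Fm
  | not : Fm → Fm
  | and : Fm → Fm → Fm
  | or : Fm → Fm → Fm
  | imp : Fm → Fm → Fm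

/-- Substitution of terms for free variables in a term. -/
def Tm.subst (σ : ℕ → Tm) : Tm → Tm
  | .var k => σ k
  | .zero => .zero
  | .succ t => .succ (t.subst σ)

/-- Substitution of terms for free variables in a formula. -/
def Fm.subst (σ : ℕ → Tm) : Fm → Fm
  | .eq s t => .eq (s.subst σ) (t.subst σ)
  | .not F => .not (F.subst σ)
  | .and F G => .and (F.subst σ) (G.subst σ)
  | .or F G => .or (F.subst σ) (G.subst σ)
  | .imp F G => .imp (F.subst σ) (G.subst σ)

/-- A term is variable-free. -/
def Tm.Closed : Tm → Prop
  | .var _ => False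
  | .zero => True
  | .succ t => t.Closed

/-- A formula is variable-free. -/
def Fm.Closed : Fm → Prop
  | .eq s t => s.Closed ∧ t.Closed
  | .not F => F.Closed
  | .and F G => F.Closed ∧ G.Closed
  | .or F G => F.Closed ∧ G.Closed
  | .imp F G => F.Closed ∧ G.Closed

/-- Truth under a Boolean valuation of the atomic equations. -/
def Fm.holds (v : Tm → Tm → Prop) : Fm → Prop
  | .eq s t => v s t
  | .not F => ¬ F.holds v
  | .and F G => F.holds v ∧ G.holds v
  | .or F G => F.holds v ∨ G.holds v
  | .imp F G => F.holds v → G.holds v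

/-- Propositional tautology: true under every Boolean valuation of atoms. -/
def Fm.Taut (F : Fm) : Prop := ∀ v : Tm → Tm → Prop, F.holds v

/-- The elementary calculus of free variables: propositional tautologies as
    axioms, the given proper axioms, a substitution rule for free variables,
    and modus ponens. -/
inductive Deriv (Ax : Fm → Prop) : Fm → Prop where
  | ax {F} : Ax F → Deriv Ax F
  | taut {F} : F.Taut → Deriv Ax F
  | subst {F} (σ : ℕ → Tm) : Deriv Ax F → Deriv Ax (F.subst σ)
  | mp {F G} : Deriv Ax F → Deriv Ax (Fm.imp F G) → Deriv Ax G

/-- Derivations using modus ponens alone from a set of initial formulas. -/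
inductive DerivMP (init : Fm → Prop) : Fm → Prop where
  | ax {F} : init F → DerivMP init F
  | mp {F G} : DerivMP init F → DerivMP init (Fm.imp F G) → DerivMP init G

lemma Tm.subst_subst (σ τ : ℕ → Tm) (t : Tm) :
    (t.subst σ).subst τ = t.subst (fun k => (σ k).subst τ) := by
  induction t <;> simp [Tm.subst, *]

lemma Fm.subst_subst (σ τ : ℕ → Tm) (F : Fm) :
    (F.subst σ).subst τ = F.subst (fun k => (σ k).subst τ) := by
  induction F <;> simp [Fm.subst, Tm.subst_subst, *]

lemma Tm.closed_subst {σ : ℕ → Tm} (hσ : ∀ k, (σ k).Closed) (t : Tm) : (t.subst σ).Closed := by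
  induction t <;> simp [Tm.subst, Tm.Closed, *]

lemma Fm.closed_subst {σ : ℕ → Tm} (hσ : ∀ k, (σ k).Closed) (F : Fm) : (F.subst σ).Closed := by
  induction F <;> simp [Fm.subst, Fm.Closed, Tm.closed_subst hσ, *]

lemma Tm.subst_of_closed (σ : ℕ → Tm) {t : Tm} (ht : t.Closed) : t.subst σ = t := by
  induction t <;> simp_all [Tm.subst, Tm.Closed]

lemma Fm.subst_of_closed (σ : ℕ → Tm) {F : Fm} (hF : F.Closed) : F.subst σ = F := by
  induction F <;> simp_all [Fm.subst, Fm.Closed, Tm.subst_of_closed]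

lemma Fm.holds_subst (σ : ℕ → Tm) (v : Tm → Tm → Prop) (F : Fm) :
    (F.subst σ).holds v ↔ F.holds (fun s t => v (s.subst σ) (t.subst σ)) := by
  induction F <;> simp [Fm.subst, Fm.holds, *]

lemma Fm.Taut.subst (σ : ℕ → Tm) {F : Fm} (hF : F.Taut) : (F.subst σ).Taut :=
  fun v => (Fm.holds_subst σ v F).2 (hF _)

def ClosedInstance (Ax : Fm → Prop) (G : Fm) : Prop :=
  (G.Taut ∧ G.Closed) ∨ ∃ (A : Fm) (σ : ℕ → Tm), Ax A ∧ (∀ k, (σ k).Closed) ∧ G = A.subst σ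

theorem Deriv.derivMP_closedInstance_subst {Ax : Fm → Prop} {G : Fm} (hG : Deriv Ax G)
    {σ : ℕ → Tm} (hσ : ∀ k, (σ k).Closed) : DerivMP (ClosedInstance Ax) (G.subst σ) := by
  induction hG generalizing σ with
  | ax hA => exact .ax (.inr ⟨_, σ, hA, hσ, rfl⟩)
  | taut hT => exact .ax (.inl ⟨hT.subst σ, Fm.closed_subst hσ _⟩)
  | subst τ _ ih =>
    rw [Fm.subst_subst]
    exact ih fun k => Tm.closed_subst hσ (τ k)
  | mp _ _ ihF ihFG => exact .mp (ihF hσ) (ihFG hσ)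

/-- Elimination of free variables: a variable-free formula provable in the
    elementary calculus of free variables from quantifier-free axioms is
    provable by modus ponens alone from variable-free propositional
    tautologies and variable-free substitution instances of the axioms. -/
theorem stmt_17 (Ax : Fm → Prop) (F : Fm) (hF : F.Closed)
    (hd : Deriv Ax F) :
    DerivMP (fun G => (G.Taut ∧ G.Closed) ∨
      ∃ (A : Fm) (σ : ℕ → Tm), Ax A ∧ (∀ k, (σ k).Closed) ∧ G = A.subst σ) F := by
  have h := hd.derivMP_closedInstance_subst (σ := fun _ => .zero) fun _ => trivial
  rwa [Fm.subst_of_closed _ hF] at h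
end

section
/- One step of the Hilbertsche Ansatz reduces the number of distinct epsilon terms' critical formulas: if a propositional proof of a formula B uses critical formulas A(t₁) → A(c), …, A(tₙ) → A(c) for a single fresh constant c (with A and B not containing c, and t₁,…,tₙ not containing c), then there are propositional proofs of ¬A(t₁) → B and of A(t₁) → B[c := t₁], each using only the critical formulas for t₂, …, tₙ; combining by excluded middle and induction on n yields a propositional proof of B using no critical formulas. -/
/-!
A valuation satisfying the critical formulas for `t₂, …, tₙ` either falsifies `A(t₁)`, and then
also satisfies `A(t₁) → A(c)`, or it satisfies `A(t₁)`, and then re-evaluating the fresh atoms of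
`A(c)` as those of `A(t₁)` makes `A(c)` true, hence every critical formula true, while the value of
`B` (which does not mention `c`) is unchanged. So the critical formula for `t₁` can be eliminated,
and eliminating them one at a time leaves `B` provable from no hypotheses.
-/

/-- Propositional formulas over a type of atoms. -/
inductive PFm (α : Type*) where
  | atom : α → PFm α
  | not : PFm α → PFm α
  | imp : PFm α → PFm α → PFm α

/-- Renaming of atoms (e.g. the effect of substituting a term for the
    constant c on atomic formulas). -/
def PFm.map {α β : Type*} (s : α → β) : PFm α → PFm β
  | .atom a => .atom (s a)
  | .not F => .not (F.map s)
  | .imp F G => .imp (F.map s) (G.map s)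

/-- Truth of a propositional formula under a valuation of the atoms. -/
def PFm.eval {α : Type*} (v : α → Prop) : PFm α → Prop
  | .atom a => v a
  | .not F => ¬ F.eval v
  | .imp F G => F.eval v → G.eval v

/-- Classical propositional consequence from a set of hypotheses (equivalent,
    by soundness and completeness, to propositional derivability). -/
def PConseq {δ : Type*} (Γ : Set (PFm δ)) (φ : PFm δ) : Prop :=
  ∀ v : δ → Prop, (∀ ψ ∈ Γ, ψ.eval v) → φ.eval v

namespace PFm

variable {α β γ : Type*}

lemma eval_map (s : α → β) (v : β → Prop) (F : PFm α) :
    (F.map s).eval v = F.eval (v ∘ s) := by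
  induction F <;> simp [PFm.map, PFm.eval, *]

lemma eval_map_sumElim (A : PFm (α ⊕ γ)) (σ : γ → α) (w : α → Prop) :
    (A.map (Sum.elim id σ)).eval w = A.eval (Sum.elim w (w ∘ σ)) := by
  rw [eval_map]
  congr 1
  funext x
  cases x <;> rfl

lemma eval_map_inl (B : PFm α) (v : α ⊕ γ → Prop) :
    (B.map Sum.inl).eval v = B.eval (v ∘ Sum.inl) :=
  eval_map _ _ _

/-- The critical formula `A(t) → A(c)`, where the atoms of `A(t)` are those of `A(c)` with the
atoms in `γ` (those containing `c`) renamed by `σ`. -/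
def critical (A : PFm (α ⊕ γ)) (σ : γ → α) : PFm (α ⊕ γ) :=
  .imp ((A.map (Sum.elim id σ)).map Sum.inl) A

end PFm

open PFm

namespace PConseq

variable {α γ δ : Type*}

lemma mono {Γ Δ : Set (PFm δ)} {φ : PFm δ} (hΓΔ : Γ ⊆ Δ) (h : PConseq Γ φ) : PConseq Δ φ :=
  fun v hv => h v fun ψ hψ => hv ψ (hΓΔ hψ)

lemma valid_of_empty {B : PFm α} (h : PConseq (∅ : Set (PFm (α ⊕ γ))) (B.map Sum.inl))
    (w : α → Prop) : B.eval w := by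
  simpa [eval_map_inl] using h (Sum.elim w fun _ => True) (by simp)

variable {A : PFm (α ⊕ γ)} {σ : γ → α} {B : PFm α} {Γ : Set (PFm (α ⊕ γ))}

lemma imp_of_not_instance (h : PConseq (insert (critical A σ) Γ) (B.map Sum.inl)) :
    PConseq Γ (.imp (.not ((A.map (Sum.elim id σ)).map Sum.inl)) (B.map Sum.inl)) := by
  intro v hΓ hnot
  refine h v ?_
  rintro ψ (rfl | hψ)
  · exact fun hinst => absurd hinst hnot
  · exact hΓ ψ hψ

lemma imp_of_instance (hΓ : ∀ ψ ∈ Γ, ∃ τ, ψ = critical A τ)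
    (h : PConseq (insert (critical A σ) Γ) (B.map Sum.inl)) :
    PConseq Γ (.imp ((A.map (Sum.elim id σ)).map Sum.inl) (B.map Sum.inl)) := by
  intro v _ hinst
  set w := v ∘ Sum.inl
  -- Substituting `c := t` turns `A(c)` into the true formula `A(t)`.
  have hA : A.eval (Sum.elim w (w ∘ σ)) := by
    rwa [eval_map_inl, eval_map_sumElim] at hinst
  have hcrit : ∀ ψ ∈ insert (critical A σ) Γ, ψ.eval (Sum.elim w (w ∘ σ)) := by
    rintro ψ (rfl | hψ)
    · exact fun _ => hA
    · obtain ⟨τ, rfl⟩ := hΓ ψ hψ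
      exact fun _ => hA
  simpa [eval_map_inl] using h _ hcrit

lemma of_insert_critical (hΓ : ∀ ψ ∈ Γ, ∃ τ, ψ = critical A τ)
    (h : PConseq (insert (critical A σ) Γ) (B.map Sum.inl)) :
    PConseq Γ (B.map Sum.inl) := by
  intro v hv
  by_cases hinst : ((A.map (Sum.elim id σ)).map Sum.inl).eval v
  · exact imp_of_instance hΓ h v hv hinst
  · exact imp_of_not_instance h v hv hinst

lemma valid_of_critical_finset {ι : Type*} (τ : ι → γ → α) (s : Finset ι)
    (h : PConseq {ψ | ∃ i ∈ s, ψ = critical A (τ i)} (B.map Sum.inl)) (w : α → Prop) :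
    B.eval w := by
  classical
  induction s using Finset.induction_on with
  | empty => exact valid_of_empty (by simpa using h) w
  | insert i s _ ih =>
    refine ih (of_insert_critical (A := A) (σ := τ i) ?_ (h.mono ?_))
    · rintro ψ ⟨j, -, rfl⟩
      exact ⟨τ j, rfl⟩
    · rintro ψ ⟨j, hj, rfl⟩
      rcases Finset.mem_insert.mp hj with rfl | hj
      · exact Set.mem_insert _ _
      · exact Set.mem_insert_of_mem _ ⟨j, hj, rfl⟩

end PConseq

/-- Encoding: atoms in `α` do not contain the critical variable; atoms in `γ` are the atoms of
`A(x)` containing `x`, which at the fresh constant `c` are fresh atoms. Thus `A` is `A(c)`,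
`A.map (Sum.elim id (τ i))` is `A(tᵢ)`, and `B[c := t₁] = B`. -/
theorem stmt_18 {α γ : Type*} (n : ℕ) (hn : 0 < n)
    (A : PFm (α ⊕ γ)) (τ : Fin n → γ → α) (B : PFm α)
    (At : Fin n → PFm α) (hAt : ∀ i, At i = A.map (Sum.elim id (τ i)))
    (crit : Fin n → PFm (α ⊕ γ))
    (hcrit : ∀ i, crit i = PFm.imp ((At i).map Sum.inl) A)
    (hB : PConseq {ψ | ∃ i, ψ = crit i} (B.map Sum.inl)) :
    PConseq {ψ | ∃ i, i ≠ ⟨0, hn⟩ ∧ ψ = crit i}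
        (PFm.imp (PFm.not ((At ⟨0, hn⟩).map Sum.inl)) (B.map Sum.inl)) ∧
    PConseq {ψ | ∃ i, i ≠ ⟨0, hn⟩ ∧ ψ = crit i}
        (PFm.imp ((At ⟨0, hn⟩).map Sum.inl) (B.map Sum.inl)) ∧
    (∀ w : α → Prop, B.eval w) := by
  obtain rfl : At = fun i => A.map (Sum.elim id (τ i)) := funext hAt
  obtain rfl : crit = fun i => critical A (τ i) := funext hcrit
  have hrest : ∀ ψ ∈ {ψ | ∃ i, i ≠ ⟨0, hn⟩ ∧ ψ = critical A (τ i)}, ∃ σ, ψ = critical A σ := by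
    rintro ψ ⟨i, -, rfl⟩
    exact ⟨τ i, rfl⟩
  have hB' : PConseq (insert (critical A (τ ⟨0, hn⟩))
      {ψ | ∃ i, i ≠ ⟨0, hn⟩ ∧ ψ = critical A (τ i)}) (B.map Sum.inl) := by
    refine hB.mono ?_
    rintro ψ ⟨i, rfl⟩
    by_cases hi : i = ⟨0, hn⟩
    · exact hi ▸ Set.mem_insert _ _
    · exact Set.mem_insert_of_mem _ ⟨i, hi, rfl⟩
  refine ⟨PConseq.imp_of_not_instance hB', PConseq.imp_of_instance hrest hB', ?_⟩
  exact PConseq.valid_of_critical_finset τ Finset.univ (by simpa using hB)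
end
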